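/- Zero reflection coefficient extension: let M^N(l), l = −N+1,…,N−1, be the symbol of an N×N Hermitian positive definite Toeplitz matrix, and suppose the normalized forward predictor p'^N of order N (solution of M^N p = e_0, normalized so p_0 = 1) satisfies Σ_{l} M(l+1−k) p'_k = 0 appropriately so that the reflection coefficient σ_N = 0. Then there exists M(N) ∈ ℂ (and M(−N) := conj(M(N))) such that the extended (N+1)×(N+1) Toeplitz matrix with entries M(k−l), |k−l| ≤ N, is Hermitian positive definite. -/

import Mathlib

/-!
Choose `M(N)` so that the last entry of `T_{N+1} (p, 0)` vanishes; then the zero-padded predictor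
`q` solves `T_{N+1} q = ρ e₀`. Writing any `x` as `w + x₀ q` with `w₀ = 0`, the Hermitian form
splits as `x* T_{N+1} x = w* T_{N+1} w + |x₀|² ρ`, and because `w₀ = 0` the first term is the form of
the lower-right block of `T_{N+1}`, which is `T_N` again. Both terms are nonnegative and they do
not vanish together.
-/

open scoped ComplexOrder
open Matrix

namespace Matrix

theorem star_dotProduct_mulVec_eq_submatrix_succ {R : Type*} [NonUnitalNonAssocSemiring R]
    [StarAddMonoid R] {n : ℕ} (A : Matrix (Fin (n + 1)) (Fin (n + 1)) R)
    {w : Fin (n + 1) → R} (hw : w 0 = 0) :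
    star w ⬝ᵥ A *ᵥ w = star (w ∘ Fin.succ) ⬝ᵥ A.submatrix Fin.succ Fin.succ *ᵥ (w ∘ Fin.succ) := by
  simp [dotProduct, mulVec, Fin.sum_univ_succ, hw]

theorem star_dotProduct_mulVec_add_smul {R ι : Type*} [CommRing R] [StarRing R] [Fintype ι]
    [DecidableEq ι] {A : Matrix ι ι R} (hA : A.IsHermitian) {i : ι} {q : ι → R} {ρ : R}
    (hq : A *ᵥ q = ρ • Pi.single i 1) (hqi : q i = 1) {w : ι → R} (hw : w i = 0) (a : R) :
    star (w + a • q) ⬝ᵥ A *ᵥ (w + a • q) = star w ⬝ᵥ A *ᵥ w + star a * a * ρ := by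
  have hwq : star w ⬝ᵥ A *ᵥ q = 0 := by simp [hq, hw]
  have hqw : star q ⬝ᵥ A *ᵥ w = 0 := by
    rw [dotProduct_mulVec, ← hA.eq, ← star_mulVec, hq]
    simp [hw]
  have hqq : star q ⬝ᵥ A *ᵥ q = ρ := by simp [hq, hqi]
  simp only [mulVec_add, mulVec_smul, star_add, star_smul, add_dotProduct, dotProduct_add,
    smul_dotProduct, dotProduct_smul, smul_eq_mul, hwq, hqw, hqq]
  ring

theorem posDef_of_mulVec_eq_smul_single_zero {𝕜 : Type*} [RCLike 𝕜] {n : ℕ}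
    {A : Matrix (Fin (n + 1)) (Fin (n + 1)) 𝕜} (hA : A.IsHermitian)
    (hA₁ : (A.submatrix Fin.succ Fin.succ).PosDef) {q : Fin (n + 1) → 𝕜} {ρ : 𝕜} (hρ : 0 < ρ)
    (hq : A *ᵥ q = ρ • Pi.single 0 1) (hq0 : q 0 = 1) : A.PosDef := by
  refine PosDef.of_dotProduct_mulVec_pos hA fun x hx => ?_
  set w := x - x 0 • q with hw_def
  have hw : w 0 = 0 := by simp [hw_def, hq0]
  rw [show x = w + x 0 • q by simp [hw_def], star_dotProduct_mulVec_add_smul hA hq hq0 hw,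
    star_dotProduct_mulVec_eq_submatrix_succ A hw]
  by_cases hx0 : x 0 = 0
  · have hy : w ∘ Fin.succ ≠ 0 := by
      intro hy
      refine hx (funext fun i => ?_)
      cases i using Fin.cases with
      | zero => exact hx0
      | succ i => simpa [hw_def, hx0] using congrFun hy i
    simpa [hx0] using hA₁.dotProduct_mulVec_pos hy
  · exact add_pos_of_nonneg_of_pos (hA₁.posSemidef.dotProduct_mulVec_nonneg _)
      (mul_pos (star_mul_self_pos (IsRegular.of_ne_zero hx0)) hρ)

def toeplitz {R : Type*} (n : ℕ) (c : ℤ → R) : Matrix (Fin n) (Fin n) R :=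
  of fun k l => c ((k : ℤ) - (l : ℤ))

section Toeplitz

variable {R : Type*} {n : ℕ} {c : ℤ → R}

theorem toeplitz_isHermitian [Star R] (hc : ∀ l, c (-l) = star (c l)) :
    (toeplitz n c).IsHermitian := by
  ext k l
  simp [toeplitz, ← hc]

theorem toeplitz_submatrix_succ :
    (toeplitz (n + 1) c).submatrix Fin.succ Fin.succ = toeplitz n c := by
  ext k l
  simp [toeplitz]

theorem toeplitz_congr {c' : ℤ → R} (h : ∀ l : ℤ, l.natAbs < n → c l = c' l) :
    toeplitz n c = toeplitz n c' := by
  ext k l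
  exact h _ (by omega)

theorem toeplitz_succ_mulVec_snoc_zero [NonUnitalNonAssocSemiring R] (v : Fin n → R)
    (i : Fin (n + 1)) :
    (toeplitz (n + 1) c *ᵥ Fin.snoc v 0) i = ∑ k : Fin n, c (i - k) * v k := by
  simp [toeplitz, mulVec, dotProduct, Fin.sum_univ_castSucc]

theorem toeplitz_succ_mulVec_snoc_zero_eq [NonAssocSemiring R] (hn : 0 < n)
    {v : Fin n → R} {ρ : R}
    (hv : toeplitz n c *ᵥ v = ρ • Pi.single ⟨0, hn⟩ 1) (hlast : ∑ k : Fin n, c (n - k) * v k = 0) :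
    toeplitz (n + 1) c *ᵥ Fin.snoc v 0 = ρ • Pi.single 0 1 := by
  funext i
  rw [toeplitz_succ_mulVec_snoc_zero]
  cases i using Fin.lastCases with
  | last => simpa [Pi.single_apply, Fin.ext_iff, hn.ne'] using hlast
  | cast j =>
    have := congrFun hv j
    simp only [toeplitz, mulVec, dotProduct, of_apply] at this
    simp [this, Pi.single_apply, Fin.ext_iff]

end Toeplitz

end Matrix

def extendSymbol {R : Type*} [Star R] (N : ℕ) (M : ℤ → R) (MN : R) : ℤ → R :=
  fun l => if l = N then MN else if l = -N then star MN else M l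

section ExtendSymbol

variable {R : Type*} {N : ℕ} {M : ℤ → R} {MN : R}

theorem extendSymbol_of_natAbs_lt [Star R] {l : ℤ} (hl : l.natAbs < N) :
    extendSymbol N M MN l = M l := by
  rw [extendSymbol, if_neg (by omega), if_neg (by omega)]

theorem extendSymbol_neg [InvolutiveStar R] (hN : 0 < N) (hM : ∀ l, M (-l) = star (M l))
    (l : ℤ) : extendSymbol N M MN (-l) = star (extendSymbol N M MN l) := by
  unfold extendSymbol
  split_ifs <;> first | omega | simp [hM]

theorem sum_extendSymbol_sub_mul [NonUnitalNonAssocSemiring R] [Star R] (hN : 0 < N)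
    (p : Fin N → R) :
    ∑ k : Fin N, extendSymbol N M MN (N - k) * p k =
      MN * p ⟨0, hN⟩ + ∑ k ∈ Finset.univ.erase (⟨0, hN⟩ : Fin N), M (N - k) * p k := by
  rw [← Finset.add_sum_erase _ _ (Finset.mem_univ (⟨0, hN⟩ : Fin N))]
  congr 1
  · simp [extendSymbol]
  · refine Finset.sum_congr rfl fun k hk => ?_
    have hk0 : (k : ℕ) ≠ 0 := fun h => Finset.ne_of_mem_erase hk (Fin.ext h)
    rw [extendSymbol_of_natAbs_lt (by omega)]

end ExtendSymbol

theorem stmt10 (N : ℕ) (hN : 0 < N) (M : ℤ → ℂ)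
    (hherm : ∀ l : ℤ, M (-l) = star (M l))
    (hpos : (Matrix.of fun k l : Fin N => M ((k : ℤ) - (l : ℤ))).PosDef)
    (p : Fin N → ℂ) (ρ : ℝ) (hρ : 0 < ρ)
    (hp : (Matrix.of fun k l : Fin N => M ((k : ℤ) - (l : ℤ))).mulVec p =
      (ρ : ℂ) • (Pi.single ⟨0, hN⟩ 1 : Fin N → ℂ))
    (hp0 : p ⟨0, hN⟩ = 1) :
    ∃ MN : ℂ,
      (∑ k : Fin N,
          (fun l : ℤ => if l = N then MN else if l = -N then star MN else M l)
            ((N : ℤ) - (k : ℤ)) * p k) = 0 ∧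
      (Matrix.of fun k l : Fin (N + 1) =>
          (fun l : ℤ => if l = N then MN else if l = -N then star MN else M l)
            ((k : ℤ) - (l : ℤ))).PosDef := by
  set MN := -∑ k ∈ Finset.univ.erase (⟨0, hN⟩ : Fin N), M (N - k) * p k
  have hlast : ∑ k : Fin N, extendSymbol N M MN (N - k) * p k = 0 := by
    rw [sum_extendSymbol_sub_mul hN, hp0, mul_one, neg_add_cancel]
  have hsmall : toeplitz N (extendSymbol N M MN) = toeplitz N M :=
    toeplitz_congr fun _ hl => extendSymbol_of_natAbs_lt hl
  have hpred : toeplitz N (extendSymbol N M MN) *ᵥ p = (ρ : ℂ) • Pi.single ⟨0, hN⟩ 1 := by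
    rw [hsmall]
    exact hp
  have hext : (toeplitz (N + 1) (extendSymbol N M MN)).PosDef :=
    posDef_of_mulVec_eq_smul_single_zero (toeplitz_isHermitian (extendSymbol_neg hN hherm))
      (by rwa [toeplitz_submatrix_succ, hsmall]) (Complex.zero_lt_real.mpr hρ)
      (toeplitz_succ_mulVec_snoc_zero_eq hN hpred hlast)
      (by rwa [show (0 : Fin (N + 1)) = Fin.castSucc ⟨0, hN⟩ from rfl, Fin.snoc_castSucc])
  exact ⟨MN, hlast, hext⟩
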